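/- Let G be a connected unweighted graph with incidence matrix B and Laplacian L = BBᵀ, γ ∈ [0, π/2), and let x ∈ ℝ^m satisfy ‖x‖∞ ≤ γ. Then for every y = Bᵀw ∈ Im(Bᵀ) with ‖y‖₂ = 1, one has ‖𝒫 diag(sinc(x)) y‖₂ ≥ sinc(γ), where 𝒫 = Bᵀ L† B. Consequently α₂(γ) ≥ sinc(γ). -/

import Mathlib

open Matrix

/-- The unnormalized sinc function, `sinc t = sin t / t` with `sinc 0 = 1`. -/
noncomputable def sinc (t : ℝ) : ℝ := if t = 0 then 1 else Real.sin t / t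

/-- The Euclidean (2-)norm of a real vector. -/
noncomputable def norm2 {k : ℕ} (v : Fin k → ℝ) : ℝ := Real.sqrt (∑ i, v i ^ 2)

/-! For `y = Bᵀw`, the identity `L L† L = L` forces `B 𝒫 = B`, so `yᵀ 𝒫 D y = yᵀ D y` with
`D = diag(sinc x)`. Since `sinc` is even and decreasing on `[0, π]`, every entry of `D` is at least
`sinc γ`, hence `yᵀ 𝒫 D y ≥ sinc γ ‖y‖² = sinc γ`, and Cauchy–Schwarz gives `‖𝒫 D y‖ ≥ yᵀ 𝒫 D y`. -/

namespace Real

theorem sinc_abs (x : ℝ) : sinc |x| = sinc x := by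
  rcases abs_choice x with h | h <;> rw [h]
  exact sinc_neg x

theorem antitoneOn_sinc : AntitoneOn sinc (Set.Icc 0 π) := by
  intro s hs t ht hst
  rcases eq_or_ne s 0 with rfl | hs0
  · rw [sinc_zero]
    exact sinc_le_one t
  have ht0 : t ≠ 0 := by
    rintro rfl
    exact hs0 (le_antisymm hst hs.1)
  rcases hst.eq_or_lt with rfl | hlt
  · rfl
  have hslope := strictConcaveOn_sin_Icc.secant_strict_mono (a := 0) ⟨le_rfl, pi_pos.le⟩ hs ht
    hs0 ht0 hlt
  simp only [sin_zero, sub_zero] at hslope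
  rw [sinc_of_ne_zero hs0, sinc_of_ne_zero ht0]
  exact hslope.le

end Real

namespace Matrix

variable {m n R : Type*} [Fintype m] [Fintype n]

theorem mul_conjTranspose_mul_mul_eq_self [DecidableEq m] [PartialOrder R] [Ring R] [StarRing R]
    [StarOrderedRing R] [NoZeroDivisors R] {B : Matrix m n R} {G : Matrix m m R}
    (hG : B * Bᴴ * G * (B * Bᴴ) = B * Bᴴ) : B * Bᴴ * G * B = B := by
  have h : (1 - B * Bᴴ * G) * (B * Bᴴ) = 0 := by
    rw [Matrix.sub_mul, Matrix.one_mul, hG, sub_self]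
  rw [mul_self_mul_conjTranspose_eq_zero, Matrix.sub_mul, Matrix.one_mul, sub_eq_zero] at h
  exact h.symm

theorem transpose_mulVec_dotProduct_mulVec_of_mul_eq_self [CommSemiring R] {B : Matrix m n R}
    {P : Matrix n n R} (hP : B * P = B) (w : m → R) (u : n → R) :
    (Bᵀ *ᵥ w) ⬝ᵥ (P *ᵥ u) = (Bᵀ *ᵥ w) ⬝ᵥ u := by
  rw [dotProduct_mulVec, ← vecMul_transpose, transpose_transpose, vecMul_vecMul, hP]

end Matrix

theorem dotProduct_le_norm2_mul_norm2 {k : ℕ} (u v : Fin k → ℝ) :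
    u ⬝ᵥ v ≤ norm2 u * norm2 v :=
  Real.sum_mul_le_sqrt_mul_sqrt _ u v

theorem min_amplification_two_norm_lower_bound_general
    (n m : ℕ) (B : Matrix (Fin n) (Fin m) ℝ)
    (L Ldag : Matrix (Fin n) (Fin n) ℝ)
    (hL : L = B * Bᵀ)
    (hmp1 : L * Ldag * L = L)
    (P : Matrix (Fin m) (Fin m) ℝ)
    (hP : P = Bᵀ * Ldag * B)
    (γ : ℝ) (hγ : 0 ≤ γ ∧ γ < Real.pi / 2)
    (x : Fin m → ℝ) (hx : ∀ e, |x e| ≤ γ) :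
    ∀ w : Fin n → ℝ, norm2 (Bᵀ.mulVec w) = 1 →
      sinc γ ≤ norm2 (P.mulVec (fun e => sinc (x e) * Bᵀ.mulVec w e)) := by
  intro w hw
  set y := Bᵀ *ᵥ w
  have hγπ : γ ≤ Real.pi := by linarith [hγ.2, Real.pi_pos]
  -- `sinc` is definitionally Mathlib's `Real.sinc`.
  have hsinc (e : Fin m) : Real.sinc γ ≤ Real.sinc (x e) := Real.sinc_abs (x e) ▸
    Real.antitoneOn_sinc ⟨abs_nonneg _, (hx e).trans hγπ⟩ ⟨(abs_nonneg _).trans (hx e), hγπ⟩ (hx e)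
  have hBP : B * P = B := by
    rw [hP, ← Matrix.mul_assoc, ← Matrix.mul_assoc, ← conjTranspose_eq_transpose_of_trivial]
    exact mul_conjTranspose_mul_mul_eq_self (by rwa [conjTranspose_eq_transpose_of_trivial, ← hL])
  calc sinc γ = ∑ e, sinc γ * y e ^ 2 := by
        rw [← Finset.mul_sum, Real.sqrt_eq_one.mp hw, mul_one]
    _ ≤ ∑ e, sinc (x e) * y e ^ 2 := by gcongr with e; exact hsinc e
    _ = y ⬝ᵥ (P *ᵥ fun e => sinc (x e) * y e) := by
        rw [transpose_mulVec_dotProduct_mulVec_of_mul_eq_self hBP]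
        exact Finset.sum_congr rfl fun e _ => by ring
    _ ≤ norm2 y * norm2 (P *ᵥ fun e => sinc (x e) * y e) := dotProduct_le_norm2_mul_norm2 _ _
    _ = _ := by rw [hw, one_mul]

/-- For a connected unweighted graph with incidence matrix `B`,
Laplacian `L = BBᵀ`, Moore–Penrose pseudoinverse `L†`, and cutset projection
`𝒫 = Bᵀ L† B`, let `γ ∈ [0, π/2)` and `x ∈ ℝ^m` with `‖x‖_∞ ≤ γ`. Then every
`y = Bᵀw ∈ Im(Bᵀ)` with `‖y‖₂ = 1` satisfies `‖𝒫 diag(sinc x) y‖₂ ≥ sinc γ`; consequently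
the 2-norm minimum amplification factor satisfies `α₂(γ) ≥ sinc γ`. -/
theorem min_amplification_two_norm_lower_bound
    (n m : ℕ) (B : Matrix (Fin n) (Fin m) ℝ)
    (hconn : ∀ x : Fin n → ℝ, Bᵀ.mulVec x = 0 ↔ ∃ c : ℝ, x = fun _ => c)
    (L Ldag : Matrix (Fin n) (Fin n) ℝ)
    (hL : L = B * Bᵀ)
    (hmp1 : L * Ldag * L = L) (hmp2 : Ldag * L * Ldag = Ldag)
    (hmp3 : (L * Ldag)ᵀ = L * Ldag) (hmp4 : (Ldag * L)ᵀ = Ldag * L)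
    (P : Matrix (Fin m) (Fin m) ℝ)
    (hP : P = Bᵀ * Ldag * B)
    (γ : ℝ) (hγ : 0 ≤ γ ∧ γ < Real.pi / 2)
    (x : Fin m → ℝ) (hx : ∀ e, |x e| ≤ γ) :
    ∀ w : Fin n → ℝ, norm2 (Bᵀ.mulVec w) = 1 →
      sinc γ ≤ norm2 (P.mulVec (fun e => sinc (x e) * Bᵀ.mulVec w e)) :=
  min_amplification_two_norm_lower_bound_general n m B L Ldag hL hmp1 P hP γ hγ x hx
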